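/- arXiv:2203.05160 — 3 statements merged into one kernel-verified Lean document; each statement's English description precedes it below -/
import Mathlib

section
/- If ℓ1 and ℓ2 are distinct positive integers whose binary representations have equal length, then there exists an index j such that the j-th bit of Trans(ℓ1) is 0 and the j-th bit of Trans(ℓ2) is 1 (and symmetrically an index where Trans(ℓ1) has 1 and Trans(ℓ2) has 0). -/
def bin (n : ℕ) : List Bool := (Nat.bits n).reverse

def transLabel (n : ℕ) : List Bool :=
  (bin n).flatMap (fun b =>
    if b then [false, true, false, true, false, true]
    else [true, false, true, false, true, false])

def blk (b : Bool) : List Bool :=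
  if b then [false, true, false, true, false, true]
  else [true, false, true, false, true, false]

lemma blk_len (b : Bool) : (blk b).length = 6 := by cases b <;> rfl

lemma flatMap_getElem? (l : List Bool) (i k : ℕ) (hk : k < 6) (hi : i < l.length) :
    (l.flatMap blk)[6 * i + k]? = (blk l[i])[k]? := by
  induction l generalizing i with
  | nil => simp at hi
  | cons a t ih =>
    rw [List.flatMap_cons]
    cases i with
    | zero =>
      simp only [Nat.mul_zero, Nat.zero_add]
      rw [List.getElem?_append_left (by rw [blk_len]; exact hk)]
      rfl
    | succ i =>
      have h6 : 6 * (i + 1) + k = (blk a).length + (6 * i + k) := by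
        rw [blk_len]; ring
      rw [h6, List.getElem?_append_right (Nat.le_add_right _ _), Nat.add_sub_cancel_left]
      simpa using ih i (Nat.lt_of_succ_lt_succ hi)

lemma transLabel_len (n : ℕ) : (transLabel n).length = 6 * (bin n).length := by
  unfold transLabel
  rw [show (fun b => if b then [false, true, false, true, false, true]
    else [true, false, true, false, true, false]) = blk from rfl]
  induction (bin n) with
  | nil => rfl
  | cons a t ih => simp [List.flatMap_cons, ih, blk_len]; ring

theorem trans_equal_length_differ (ℓ1 ℓ2 : ℕ) (h1 : 0 < ℓ1) (h2 : 0 < ℓ2)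
    (hne : ℓ1 ≠ ℓ2) (hlen : (bin ℓ1).length = (bin ℓ2).length) :
    (∃ j, j < (transLabel ℓ1).length ∧
      (transLabel ℓ1).getD j false = false ∧ (transLabel ℓ2).getD j false = true) ∧
    (∃ j, j < (transLabel ℓ1).length ∧
      (transLabel ℓ1).getD j false = true ∧ (transLabel ℓ2).getD j false = false) := by
  have hblk : transLabel = fun n => (bin n).flatMap blk := rfl
  have hbne : bin ℓ1 ≠ bin ℓ2 := by
    intro h
    apply hne
    have hb : Nat.bits ℓ1 = Nat.bits ℓ2 := List.reverse_injective h
    have hd : Nat.digits 2 ℓ1 = Nat.digits 2 ℓ2 := by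
      rw [Nat.digits_two_eq_bits, Nat.digits_two_eq_bits, hb]
    calc ℓ1 = Nat.ofDigits 2 (Nat.digits 2 ℓ1) := (Nat.ofDigits_digits 2 ℓ1).symm
      _ = Nat.ofDigits 2 (Nat.digits 2 ℓ2) := by rw [hd]
      _ = ℓ2 := Nat.ofDigits_digits 2 ℓ2
  -- find differing index
  have hdiff : ∃ i : ℕ, (bin ℓ1)[i]? ≠ (bin ℓ2)[i]? := by
    by_contra h
    push_neg at h
    exact hbne (List.ext_getElem? h)
  obtain ⟨i, hi⟩ := hdiff
  have hilt : i < (bin ℓ1).length := by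
    by_contra h
    push_neg at h
    rw [List.getElem?_eq_none h, List.getElem?_eq_none (hlen ▸ h)] at hi
    exact hi rfl
  have hilt2 : i < (bin ℓ2).length := hlen ▸ hilt
  have hget : (bin ℓ1)[i] ≠ (bin ℓ2)[i] := by
    intro h
    rw [List.getElem?_eq_getElem hilt, List.getElem?_eq_getElem hilt2, h] at hi
    exact hi rfl
  have key : ∀ k, k < 6 → (transLabel ℓ1).getD (6*i+k) false = ((blk (bin ℓ1)[i])[k]?).getD false
      ∧ (transLabel ℓ2).getD (6*i+k) false = ((blk (bin ℓ2)[i])[k]?).getD false := by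
    intro k hk
    constructor <;>
      rw [hblk, List.getD_eq_getElem?_getD, flatMap_getElem? _ _ _ hk (by omega)]
  have hlen1 : ∀ k, k < 6 → 6*i+k < (transLabel ℓ1).length := by
    intro k hk
    rw [transLabel_len]; omega
  cases hb1 : (bin ℓ1)[i] <;> cases hb2 : (bin ℓ2)[i] <;> rw [hb1, hb2] at hget <;>
    try exact absurd rfl hget
  · constructor
    · exact ⟨6*i+1, hlen1 1 (by norm_num), by
        have := key 1 (by norm_num); rw [hb1, hb2] at this; simpa [blk] using this⟩
    · exact ⟨6*i, hlen1 0 (by norm_num), by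
        have := key 0 (by norm_num); rw [hb1, hb2] at this
        simpa [blk] using this⟩
  · constructor
    · exact ⟨6*i, hlen1 0 (by norm_num), by
        have := key 0 (by norm_num); rw [hb1, hb2] at this; simpa [blk] using this⟩
    · exact ⟨6*i+1, hlen1 1 (by norm_num), by
        have := key 1 (by norm_num); rw [hb1, hb2] at this; simpa [blk] using this⟩
end

section
/- In the infinite d-regular tree with the port labeling in which the two port numbers at the endpoints of every edge are equal, consider two agents whose walks are fixed sequences (a_1,…,a_t) and (b_1,…,b_t) of ports in {0,…,d−1}, starting at nodes v1 and v2. If for some s ≤ t the two agents occupy the same node after s steps, i.e., v1(a_1,…,a_s) = v2(b_1,…,b_s), then v2 = v1(a_1,…,a_s,b_s,b_{s−1},…,b_1). Consequently, for a fixed v1 and fixed sequences, the set of starting nodes v2 from which the agents meet within t steps has cardinality at most t. -/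
lemma foldl_reverse_cancel {V : Type*} {d : ℕ} (step : Fin d → V → V)
    (hstep : ∀ p, Function.Involutive (step p)) :
    ∀ (l : List (Fin d)) (v : V),
      l.reverse.foldl (fun u p => step p u) (l.foldl (fun u p => step p u) v) = v := by
  intro l
  induction l with
  | nil => intro v; simp
  | cons p l ih =>
      intro v
      simp [List.foldl_append, ih, hstep p v]

theorem meet_backtrack_and_few_starting_nodes
    (V : Type*) (d : ℕ) (step : Fin d → V → V)
    (hstep : ∀ p, Function.Involutive (step p))
    (v1 : V) (a b : List (Fin d)) (t : ℕ)
    (ha : a.length = t) (hb : b.length = t) :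
    (∀ (v2 : V) (s : ℕ), s ≤ t →
      (a.take s).foldl (fun u p => step p u) v1 =
        (b.take s).foldl (fun u p => step p u) v2 →
      v2 = ((a.take s) ++ (b.take s).reverse).foldl (fun u p => step p u) v1) ∧
    Nat.card {v2 : V | ∃ s, 1 ≤ s ∧ s ≤ t ∧
      (a.take s).foldl (fun u p => step p u) v1 =
        (b.take s).foldl (fun u p => step p u) v2} ≤ t := by
  classical
  have key : ∀ (v2 : V) (s : ℕ),
      (a.take s).foldl (fun u p => step p u) v1 =
        (b.take s).foldl (fun u p => step p u) v2 →
      v2 = ((a.take s) ++ (b.take s).reverse).foldl (fun u p => step p u) v1 := by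
    intro v2 s h
    rw [List.foldl_append, h]
    exact (foldl_reverse_cancel step hstep (b.take s) v2).symm
  refine ⟨fun v2 s _ h => key v2 s h, ?_⟩
  set g : ℕ → V := fun s => ((a.take s) ++ (b.take s).reverse).foldl (fun u p => step p u) v1
  have hsub : {v2 : V | ∃ s, 1 ≤ s ∧ s ≤ t ∧
      (a.take s).foldl (fun u p => step p u) v1 =
        (b.take s).foldl (fun u p => step p u) v2} ⊆ ↑((Finset.Icc 1 t).image g) := by
    intro v2 ⟨s, h1, h2, h3⟩
    simp only [Finset.coe_image, Set.mem_image, Finset.mem_coe, Finset.mem_Icc]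
    exact ⟨s, ⟨h1, h2⟩, (key v2 s h3).symm⟩
  calc Nat.card {v2 : V | ∃ s, 1 ≤ s ∧ s ≤ t ∧
      (a.take s).foldl (fun u p => step p u) v1 =
        (b.take s).foldl (fun u p => step p u) v2}
      ≤ Nat.card ↑((Finset.Icc 1 t).image g) :=
        Nat.card_mono ((Finset.Icc 1 t).image g).finite_toSet hsub
    _ = ((Finset.Icc 1 t).image g).card := Nat.card_eq_finsetCard _
    _ ≤ (Finset.Icc 1 t).card := Finset.card_image_le
    _ ≤ t := by simp
end

section
/- For any d ≥ 3, any deterministic rendezvous algorithm for two agents starting simultaneously at distance D in the infinite d-regular tree with the symmetric port labeling (equal port numbers at both endpoints of every edge) requires time at least z(D)/2, where z(D) is the number of nodes in a ball of radius D. In particular, rendezvous time is Ω(z(D)) and hence exponential in D. -/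
/-- Size of the ball of radius `D` in the infinite `d`-regular tree (`d ≥ 3`). -/
def zball (d D : ℕ) : ℕ := 1 + d * (((d - 1) ^ D - 1) / (d - 2))

/-- One move in the infinite `d`-regular tree with the symmetric port labeling:
nodes are reduced words over `Fin d` (no two equal consecutive letters, the empty
word being a fixed node); taking port `p` cancels a trailing `p` or appends `p`. -/
def stepW {d : ℕ} (p : Fin d) (w : List (Fin d)) : List (Fin d) :=
  if w.getLast? = some p then w.dropLast else w ++ [p]

/-- Node reached from `v` by taking the consecutive ports of `l`. -/
def walkW {d : ℕ} (v : List (Fin d)) (l : List (Fin d)) : List (Fin d) :=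
  l.foldl (fun w p => stepW p w) v

namespace RV
variable {d : ℕ}

lemma chain'_dropLast {w : List (Fin d)} (h : w.Chain' (· ≠ ·)) :
    w.dropLast.Chain' (· ≠ ·) := h.prefix (List.dropLast_prefix w)

lemma getLast?_dropLast_ne {w : List (Fin d)} {p : Fin d} (h : w.Chain' (· ≠ ·))
    (hl : w.getLast? = some p) : w.dropLast.getLast? ≠ some p := by
  have hne : w ≠ [] := by rintro rfl; simp at hl
  have hw : w.dropLast ++ [w.getLast hne] = w := List.dropLast_append_getLast hne
  have hg : w.getLast hne = p := by
    rw [List.getLast?_eq_getLast hne] at hl; exact Option.some_injective _ hl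
  rw [← hw, hg] at h
  rw [List.Chain', List.isChain_append] at h
  intro hc
  exact h.2.2 p hc p (by simp) rfl

lemma stepW_chain' {p : Fin d} {w : List (Fin d)} (h : w.Chain' (· ≠ ·)) :
    (stepW p w).Chain' (· ≠ ·) := by
  unfold stepW
  split
  · exact chain'_dropLast h
  · rename_i hl
    rw [List.Chain', List.isChain_append]
    refine ⟨h, List.isChain_singleton _, ?_⟩
    intro x hx y hy
    simp only [List.head?_cons, Option.mem_def, Option.some_inj] at hy
    subst hy
    rw [Option.mem_def] at hx
    rintro rfl
    exact hl hx

lemma stepW_stepW {p : Fin d} {w : List (Fin d)} (h : w.Chain' (· ≠ ·)) :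
    stepW p (stepW p w) = w := by
  unfold stepW
  by_cases hl : w.getLast? = some p
  · rw [if_pos hl, if_neg (getLast?_dropLast_ne h hl)]
    have hne : w ≠ [] := by rintro rfl; simp at hl
    have hg : w.getLast hne = p := by
      rw [List.getLast?_eq_getLast hne] at hl; exact Option.some_injective _ hl
    rw [← hg]; exact List.dropLast_append_getLast hne
  · rw [if_neg hl]
    have h2 : (w ++ [p]).getLast? = some p := by simp
    rw [if_pos h2, List.dropLast_concat]

lemma walkW_cons (v : List (Fin d)) (p : Fin d) (l : List (Fin d)) :
    walkW v (p :: l) = walkW (stepW p v) l := rfl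

lemma walkW_append (v l₁ l₂ : List (Fin d)) :
    walkW v (l₁ ++ l₂) = walkW (walkW v l₁) l₂ := List.foldl_append ..

lemma walkW_chain' {v : List (Fin d)} (h : v.Chain' (· ≠ ·)) (l : List (Fin d)) :
    (walkW v l).Chain' (· ≠ ·) := by
  induction l generalizing v with
  | nil => exact h
  | cons p l ih => rw [walkW_cons]; exact ih (stepW_chain' h)

lemma walkW_reverse {v : List (Fin d)} (h : v.Chain' (· ≠ ·)) (l : List (Fin d)) :
    walkW (walkW v l) l.reverse = v := by
  induction l generalizing v with
  | nil => rfl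
  | cons p l ih =>
    rw [walkW_cons, List.reverse_cons, walkW_append, ih (stepW_chain' h)]
    show stepW p (stepW p v) = v
    exact stepW_stepW h

def ext (a : Fin d) (c : Fin (d - 1)) : Fin d :=
  if c.val < a.val then ⟨c.val, by have := c.isLt; omega⟩
  else ⟨c.val + 1, by have := c.isLt; omega⟩

lemma ext_ne (a : Fin d) (c : Fin (d - 1)) : ext a c ≠ a := by
  unfold ext; split <;> (intro h; apply_fun Fin.val at h; simp at h; omega)

lemma ext_inj (a : Fin d) {c c' : Fin (d - 1)} (h : ext a c = ext a c') : c = c' := by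
  unfold ext at h
  apply_fun Fin.val at h
  apply Fin.ext
  split at h <;> split at h <;> simp at h <;> omega

def build (a : Fin d) : List (Fin (d - 1)) → List (Fin d)
  | [] => [a]
  | c :: cs => a :: build (ext a c) cs

lemma build_head? (a : Fin d) (l : List (Fin (d - 1))) : (build a l).head? = some a := by
  cases l <;> rfl

lemma build_length (a : Fin d) (l : List (Fin (d - 1))) :
    (build a l).length = l.length + 1 := by
  induction l generalizing a with
  | nil => rfl
  | cons c cs ih => simp [build, ih]

lemma build_chain' (a : Fin d) (l : List (Fin (d - 1))) :
    (build a l).Chain' (· ≠ ·) := by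
  induction l generalizing a with
  | nil => simp [build]; exact List.isChain_singleton _
  | cons c cs ih =>
    rw [build, List.Chain', List.isChain_cons]
    refine ⟨?_, ih _⟩
    intro y hy
    rw [build_head?] at hy
    simp only [Option.mem_def, Option.some_inj] at hy
    subst hy
    exact (ext_ne a c).symm

lemma build_inj : ∀ (l l' : List (Fin (d - 1))) (a a' : Fin d),
    build a l = build a' l' → a = a' ∧ l = l' := by
  intro l
  induction l with
  | nil =>
    intro l' a a' h
    cases l' with
    | nil => simp [build] at h; exact ⟨h, rfl⟩
    | cons c' cs' =>
      exfalso; apply_fun List.length at h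
      simp [build, build_length] at h
  | cons c cs ih =>
    intro l' a a' h
    cases l' with
    | nil =>
      exfalso; apply_fun List.length at h
      simp [build, build_length] at h
    | cons c' cs' =>
      simp only [build, List.cons.injEq] at h
      obtain ⟨rfl, h2⟩ := h
      obtain ⟨he, rfl⟩ := ih cs' _ _ h2
      exact ⟨rfl, by rw [ext_inj _ he]⟩

lemma geom_eq (m : ℕ) : ∀ n, m * (∑ k ∈ Finset.range n, (m + 1) ^ k) + 1 = (m + 1) ^ n := by
  intro n
  induction n with
  | zero => simp
  | succ n ih =>
    rw [Finset.sum_range_succ, pow_succ, mul_add]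
    nlinarith [ih]

lemma geom_le (m : ℕ) (hm : 1 ≤ m) :
    ∀ n, (∑ k ∈ Finset.range (n + 1), (m + 1) ^ k) + 1 ≤ 2 * (m + 1) ^ n := by
  intro n
  induction n with
  | zero => simp
  | succ n ih =>
    rw [Finset.sum_range_succ, pow_succ]
    nlinarith [ih, pow_pos (by omega : 0 < m + 1) n]

end RV

theorem rendezvous_lower_bound (d D : ℕ) (hd : 3 ≤ d) (hD : 1 ≤ D)
    (alg : ℕ → ℕ → Fin d) (ℓ1 ℓ2 : ℕ) (hne : ℓ1 ≠ ℓ2) :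
    ∃ v2 : List (Fin d), v2.Chain' (· ≠ ·) ∧ v2.length = D ∧
      ∀ s : ℕ, 2 * s < zball d D →
        walkW ([] : List (Fin d)) ((List.range s).map (alg ℓ1)) ≠
          walkW v2 ((List.range s).map (alg ℓ2)) := by
  classical
  set m := d - 2 with hm
  have hm1 : 1 ≤ m := by omega
  have he : d - 1 = m + 1 := by omega
  set S := ∑ k ∈ Finset.range D, (m + 1) ^ k with hSdef
  have hgeo : m * S + 1 = (m + 1) ^ D := RV.geom_eq m D
  have hz : zball d D = 1 + d * S := by
    unfold zball
    rw [he]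
    have h1 : (m + 1) ^ D - 1 = m * S := by omega
    rw [h1, Nat.mul_div_cancel_left _ (by omega : 0 < m)]
  have hle : S + 1 ≤ 2 * (m + 1) ^ (D - 1) := by
    have h2 := RV.geom_le m hm1 (D - 1)
    have hD1 : D - 1 + 1 = D := by omega
    rwa [hD1] at h2
  set N := d * (m + 1) ^ (D - 1) with hN
  have hzN : zball d D + 2 ≤ 2 * N := by
    have h1 : d * (S + 1) ≤ d * (2 * (m + 1) ^ (D - 1)) := Nat.mul_le_mul_left d hle
    rw [hz, hN]
    nlinarith
  set K := (zball d D + 1) / 2 with hK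
  set f : ℕ → List (Fin d) := fun s =>
    walkW (walkW ([] : List (Fin d)) ((List.range s).map (alg ℓ1)))
      ((List.range s).map (alg ℓ2)).reverse with hf
  set Bad : Finset (List (Fin d)) := (Finset.range K).image f with hBadDef
  have hBad : Bad.card ≤ K := le_trans Finset.card_image_le (by simp)
  set g : Fin d × (Fin (D - 1) → Fin (d - 1)) → List (Fin d) :=
    fun x => RV.build x.1 (List.ofFn x.2) with hg
  have hginj : Function.Injective g := by
    rintro ⟨a, cs⟩ ⟨a', cs'⟩ h
    obtain ⟨ha, hl⟩ := RV.build_inj _ _ _ _ h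
    have hcs : cs = cs' := List.ofFn_injective hl
    simp only at ha
    rw [ha, hcs]
  have hGood : (Finset.univ.image g).card = N := by
    rw [Finset.card_image_of_injective _ hginj, Finset.card_univ]
    simp only [Fintype.card_prod, Fintype.card_fun, Fintype.card_fin]
    rw [he]
  have hKN : K < N := by omega
  have hnsub : ¬ (Finset.univ.image g ⊆ Bad) := by
    intro hsub
    have := Finset.card_le_card hsub
    omega
  obtain ⟨v2, hv2g, hv2b⟩ := Finset.not_subset.mp hnsub
  obtain ⟨x, -, rfl⟩ := Finset.mem_image.mp hv2g
  have hchain : (g x).Chain' (· ≠ ·) := RV.build_chain' _ _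
  refine ⟨g x, hchain, ?_, ?_⟩
  · rw [hg]
    simp only [RV.build_length, List.length_ofFn]
    omega
  · intro s hs heq
    have hs' : s < K := by omega
    have hfx : g x = f s := by
      calc g x = walkW (walkW (g x) ((List.range s).map (alg ℓ2)))
            ((List.range s).map (alg ℓ2)).reverse := (RV.walkW_reverse hchain _).symm
        _ = f s := by rw [← heq]
    exact hv2b (Finset.mem_image.mpr ⟨s, Finset.mem_range.mpr hs', hfx.symm⟩)
end
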